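/- arXiv:2409.14706 — 8 statements merged into one kernel-verified Lean document; each statement's English description precedes it below -/
import Mathlib

section
/- Let Q ≥ 2 be an integer, γ ≥ 0 a real number, and J = Q+1. For any real period effects φ_1,…,φ_J and any real calendar time-varying treatment effects ξ_2,…,ξ_{J−1} (with the convention ξ_1 = ξ_J = 0), the IT-estimator weights applied to the marginal cell means of a model with calendar time-varying treatment effects satisfy Σ_{j=1}^{J} Σ_{q=1}^{Q} c(q,j)·(1{j>q}·ξ_j + φ_j) = Σ_{j=2}^{J−1} [6(j−1)(Q+1−j)/(Q(Q+1)(Q−1))]·ξ_j. In particular, the misspecified immediate treatment effect estimator is in expectation a weighted sum of the calendar time-varying treatment effect estimands with weights w₂(Q,j) = 6(j−1)(Q+1−j)/(Q(Q+1)(Q−1)) that do not depend on γ. -/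
/-!
Write `c(q,j) = M·(Q·1{q<j} + 1 − j + K·(2q − Q − 1))` with `K = γQ/(2(1+γQ))`. Since
`∑_{q ≤ n} (2q − Q − 1) = n(n − Q)` and period `j` has exactly `j − 1` treated sequences, each
column of weights sums to zero, so the period effects `φ_j` cancel; the treated cells of column
`j` carry total weight `M(1 − K)(j − 1)(Q + 1 − j)`, and `M(1 − K) = 6/(Q(Q+1)(Q−1))` because the
factors `1 + γQ` and `γQ + 2` cancel. The weights vanish at `j = 1` and `j = Q + 1`.
-/

/-- The weight the immediate-treatment (IT) GLS estimator with exchangeable working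
correlation applies to the cell mean of sequence `q` in period `j`, in a standard
stepped-wedge design with `Q` sequences and `J = Q+1` periods. -/
noncomputable def ITweight (Q : ℕ) (γ : ℝ) (q j : ℕ) : ℝ :=
  (12 * (1 + γ * Q) / ((Q : ℝ) * ((Q : ℝ) + 1) * (γ * (Q : ℝ) ^ 2 + 2 * Q - γ * Q - 2))) *
    ((Q : ℝ) * (if q < j then (1 : ℝ) else 0) + 1 - (j : ℝ) +
      γ * (Q : ℝ) * (2 * (q : ℝ) - (Q : ℝ) - 1) / (2 * (1 + γ * (Q : ℝ))))

open Finset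

theorem sum_Icc_two_mul_sub (n : ℕ) (c : ℝ) :
    ∑ q ∈ Icc 1 n, (2 * (q : ℝ) - c) = n * (n + 1 - c) := by
  induction n with
  | zero => simp
  | succ n ih =>
    rw [sum_Icc_succ_top (by omega), ih]
    push_cast
    ring

theorem sum_Icc_add_mul_centered (Q n : ℕ) (a K : ℝ) :
    ∑ q ∈ Icc 1 n, (a + K * (2 * (q : ℝ) - Q - 1)) = n * (a + K * (n - Q)) := by
  have h := sum_Icc_two_mul_sub n (Q + 1)
  simp only [sub_add_eq_sub_sub] at h
  rw [sum_add_distrib, ← mul_sum, h, sum_const, Nat.card_Icc, nsmul_eq_mul]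
  push_cast
  ring

theorem filter_Icc_one_lt {Q j : ℕ} (hj : j ≤ Q + 1) :
    {q ∈ Icc 1 Q | q < j} = Icc 1 (j - 1) := by
  ext q
  simp only [mem_filter, mem_Icc]
  omega

/-- The constant `M(Q,γ)`. -/
noncomputable def ITscale (Q : ℕ) (γ : ℝ) : ℝ :=
  12 * (1 + γ * Q) / ((Q : ℝ) * ((Q : ℝ) + 1) * (γ * (Q : ℝ) ^ 2 + 2 * Q - γ * Q - 2))

noncomputable def ITshift (Q : ℕ) (γ : ℝ) : ℝ :=
  γ * Q / (2 * (1 + γ * Q))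

section

variable {Q : ℕ} {γ : ℝ}

theorem ITweight_eq (q j : ℕ) :
    ITweight Q γ q j = ITscale Q γ *
      ((Q : ℝ) * (if q < j then 1 else 0) + ((1 - j) + ITshift Q γ * (2 * (q : ℝ) - Q - 1))) := by
  rw [ITweight, ITscale, ITshift]
  ring

theorem ITscale_mul_one_sub_ITshift (hQ : 2 ≤ Q) (hγ : 0 ≤ γ) :
    ITscale Q γ * (1 - ITshift Q γ) = 6 / ((Q : ℝ) * ((Q : ℝ) + 1) * ((Q : ℝ) - 1)) := by
  have hQ' : (2 : ℝ) ≤ Q := by exact_mod_cast hQ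
  have hA : 0 < 1 + γ * Q := by positivity
  have hD : γ * (Q : ℝ) ^ 2 + 2 * Q - γ * Q - 2 = ((Q : ℝ) - 1) * (γ * Q + 2) := by ring
  have hQ1 : (Q : ℝ) - 1 ≠ 0 := by linarith
  rw [ITscale, ITshift, hD]
  field_simp
  ring

theorem sum_ITweight_column {j : ℕ} (hj₁ : 1 ≤ j) (hj : j ≤ Q + 1) :
    ∑ q ∈ Icc 1 Q, ITweight Q γ q j = 0 := by
  rw [sum_congr rfl fun q _ => ITweight_eq q j, ← mul_sum, sum_add_distrib, ← mul_sum, sum_boole,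
    filter_Icc_one_lt hj, sum_Icc_add_mul_centered, Nat.card_Icc, Nat.add_sub_cancel,
    Nat.cast_sub hj₁]
  push_cast
  ring

theorem sum_ITweight_treated (hQ : 2 ≤ Q) (hγ : 0 ≤ γ) {j : ℕ} (hj₁ : 1 ≤ j) (hj : j ≤ Q + 1) :
    ∑ q ∈ Icc 1 Q, (if q < j then ITweight Q γ q j else 0) =
      6 * ((j : ℝ) - 1) * ((Q : ℝ) + 1 - j) / ((Q : ℝ) * ((Q : ℝ) + 1) * ((Q : ℝ) - 1)) := by
  have htreated : ∀ q ∈ Icc 1 (j - 1), ITweight Q γ q j =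
      ITscale Q γ * ((Q + 1 - j) + ITshift Q γ * (2 * (q : ℝ) - Q - 1)) := by
    intro q hq
    rw [ITweight_eq, if_pos (by simp only [mem_Icc] at hq; omega)]
    ring
  rw [mul_assoc 6, mul_div_right_comm, ← ITscale_mul_one_sub_ITshift hQ hγ, ← sum_filter,
    filter_Icc_one_lt hj, sum_congr rfl htreated, ← mul_sum, sum_Icc_add_mul_centered,
    Nat.cast_sub hj₁]
  push_cast
  ring

end

theorem IT_estimator_calendar_time_weights_general
    (Q : ℕ) (hQ : 2 ≤ Q) (γ : ℝ) (hγ : 0 ≤ γ)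
    (φ ξ : ℕ → ℝ) :
    ∑ j ∈ Finset.Icc 1 (Q + 1), ∑ q ∈ Finset.Icc 1 Q,
        ITweight Q γ q j * ((if q < j then ξ j else 0) + φ j)
      = ∑ j ∈ Finset.Icc 2 Q,
          (6 * ((j : ℝ) - 1) * ((Q : ℝ) + 1 - (j : ℝ)) /
            ((Q : ℝ) * ((Q : ℝ) + 1) * ((Q : ℝ) - 1))) * ξ j := by
  have hcolumn : ∀ j ∈ Icc 1 (Q + 1),
      ∑ q ∈ Icc 1 Q, ITweight Q γ q j * ((if q < j then ξ j else 0) + φ j) =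
        6 * ((j : ℝ) - 1) * ((Q : ℝ) + 1 - j) / ((Q : ℝ) * ((Q : ℝ) + 1) * ((Q : ℝ) - 1)) * ξ j := by
    intro j hj
    obtain ⟨hj₁, hj⟩ := mem_Icc.mp hj
    have hsplit : ∑ q ∈ Icc 1 Q, ITweight Q γ q j * ((if q < j then ξ j else 0) + φ j) =
        (∑ q ∈ Icc 1 Q, if q < j then ITweight Q γ q j else 0) * ξ j +
          (∑ q ∈ Icc 1 Q, ITweight Q γ q j) * φ j := by
      rw [sum_mul, sum_mul, ← sum_add_distrib]
      exact sum_congr rfl fun q _ => by split_ifs <;> ring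
    rw [hsplit, sum_ITweight_treated hQ hγ hj₁ hj, sum_ITweight_column hj₁ hj]
    ring
  rw [sum_congr rfl hcolumn]
  refine (sum_subset (Icc_subset_Icc (by norm_num) (by omega)) fun j hj hj' => ?_).symm
  obtain rfl | rfl : j = 1 ∨ j = Q + 1 := by simp only [mem_Icc] at hj hj'; omega
  all_goals simp

/-- With a true underlying calendar time-varying treatment effect structure, the
misspecified IT estimator is in expectation the weighted sum of the calendar
time-varying treatment effect estimands with γ-free weights
`w₂(Q,j) = 6(j−1)(Q+1−j)/(Q(Q+1)(Q−1))`. -/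
theorem IT_estimator_calendar_time_weights
    (Q : ℕ) (hQ : 2 ≤ Q) (γ : ℝ) (hγ : 0 ≤ γ)
    (φ ξ : ℕ → ℝ) (hξ1 : ξ 1 = 0) (hξJ : ξ (Q + 1) = 0) :
    ∑ j ∈ Finset.Icc 1 (Q + 1), ∑ q ∈ Finset.Icc 1 Q,
        ITweight Q γ q j * ((if q < j then ξ j else 0) + φ j)
      = ∑ j ∈ Finset.Icc 2 Q,
          (6 * ((j : ℝ) - 1) * ((Q : ℝ) + 1 - (j : ℝ)) /
            ((Q : ℝ) * ((Q : ℝ) + 1) * ((Q : ℝ) - 1))) * ξ j :=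
  IT_estimator_calendar_time_weights_general Q hQ γ hγ φ ξ
end

section
/- For every integer Q ≥ 2, the weights of the calendar time-varying treatment effect estimands in the immediate treatment effect estimator sum to one: Σ_{j=2}^{Q} w₂(Q,j) = Σ_{j=2}^{Q} 6(j−1)(Q+1−j)/(Q(Q+1)(Q−1)) = 1; hence the IT estimator is in expectation a weighted average (convex combination) of the calendar time-varying treatment effects ξ_2,…,ξ_Q. -/
open Finset

section CommRing

variable {R : Type*} [CommRing R]

theorem two_mul_sum_Icc_two_sub_one (n : ℕ) :
    2 * ∑ j ∈ Icc 2 n, ((j : R) - 1) = n * (n - 1) := by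
  induction n with
  | zero => simp
  | succ n ih =>
    rcases n.eq_zero_or_pos with rfl | hn
    · simp
    · rw [sum_Icc_succ_top (by omega), mul_add, ih]
      push_cast
      ring

theorem six_mul_sum_Icc_two_sub_one_mul (n : ℕ) :
    6 * ∑ j ∈ Icc 2 n, ((j : R) - 1) * (n + 1 - j) = n * (n + 1) * (n - 1) := by
  induction n with
  | zero => simp
  | succ n ih =>
    rcases n.eq_zero_or_pos with rfl | hn
    · simp
    · have step : ∀ j ∈ Icc 2 n, ((j : R) - 1) * ((n + 1 : ℕ) + 1 - j)
          = ((j : R) - 1) * (n + 1 - j) + ((j : R) - 1) := fun j _ => by push_cast; ring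
      rw [sum_Icc_succ_top (by omega), sum_congr rfl step, sum_add_distrib, mul_add, mul_add,
        ih, show (6 : R) = 3 * 2 by norm_num, mul_assoc 3 2, two_mul_sum_Icc_two_sub_one]
      push_cast
      ring

end CommRing

/-- The weights `w₂(Q,j) = 6(j−1)(Q+1−j)/(Q(Q+1)(Q−1))` of the calendar time-varying
treatment effect estimands in the (misspecified) immediate treatment effect estimator
sum to one over `j = 2,…,Q`. -/
theorem IT_calendar_weights_sum_to_one (Q : ℕ) (hQ : 2 ≤ Q) :
    ∑ j ∈ Finset.Icc 2 Q,
        6 * ((j : ℝ) - 1) * ((Q : ℝ) + 1 - (j : ℝ)) /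
          ((Q : ℝ) * ((Q : ℝ) + 1) * ((Q : ℝ) - 1)) = 1 := by
  have hQ' : (2 : ℝ) ≤ Q := by exact_mod_cast hQ
  have hD : (Q : ℝ) * (Q + 1) * (Q - 1) ≠ 0 :=
    mul_ne_zero (by positivity) (sub_pos.2 (by linarith)).ne'
  rw [← sum_div, div_eq_one_iff_eq hD, ← six_mul_sum_Icc_two_sub_one_mul, mul_sum]
  simp only [mul_assoc]
end

section
/- For every integer Q ≥ 2 and every integer j with 2 ≤ j ≤ Q, the weight w₂(Q,j) = 6(j−1)(Q+1−j)/(Q(Q+1)(Q−1)) is strictly positive. In particular, unlike the exposure-time case, none of the calendar time-varying treatment effect estimand weights in the immediate treatment effect estimator is negative, for any value of the correlation parameter γ. -/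
/-- Each calendar time-varying treatment effect estimand weight
`w₂(Q,j) = 6(j−1)(Q+1−j)/(Q(Q+1)(Q−1))` in the immediate treatment effect estimator is
strictly positive for `2 ≤ j ≤ Q`, regardless of the correlation parameter. -/
theorem IT_calendar_weights_positive (Q : ℕ) (hQ : 2 ≤ Q)
    (j : ℕ) (hj2 : 2 ≤ j) (hjQ : j ≤ Q) :
    0 < 6 * ((j : ℝ) - 1) * ((Q : ℝ) + 1 - (j : ℝ)) /
          ((Q : ℝ) * ((Q : ℝ) + 1) * ((Q : ℝ) - 1)) := by
  have hQ' : (2 : ℝ) ≤ Q := by exact_mod_cast hQ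
  have hj2' : (2 : ℝ) ≤ j := by exact_mod_cast hj2
  have hjQ' : (j : ℝ) ≤ Q := by exact_mod_cast hjQ
  apply div_pos
  · nlinarith [mul_pos (by linarith : (0:ℝ) < (j:ℝ)-1) (by linarith : (0:ℝ) < (Q:ℝ)+1-(j:ℝ))]
  · nlinarith [mul_pos (mul_pos (by linarith : (0:ℝ) < (Q:ℝ)) (by linarith : (0:ℝ) < (Q:ℝ)+1)) (by linarith : (0:ℝ) < (Q:ℝ)-1)]
end

section
/- Let Q ≥ 2 be an integer, γ ≥ 0 a real number, and J = Q+1. For any real period effects φ_1,…,φ_J and any real exposure time-varying treatment effects δ_1,…,δ_{J−1}, the IT-estimator weights applied to the marginal cell means of a model with exposure time-varying treatment effects satisfy Σ_{j=1}^{J} Σ_{q=1}^{Q} c(q,j)·(1{j>q}·δ_{j−q} + φ_j) = Σ_{s=1}^{J−1} w₁(Q,γ,s)·δ_s, where w₁(Q,γ,s) = 6(s−Q−1)((1+2γQ)s−(1+γ+γQ)Q)/(Q(Q+1)(γQ²+2Q−γQ−2)). -/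
/-- Gauss summation. -/
lemma ITaux_gauss (n : ℕ) : ∑ q ∈ Finset.Icc 1 n, (q:ℝ) = n*(n+1)/2 := by
  induction n with
  | zero => simp
  | succ n ih => rw [Finset.sum_Icc_succ_top (by omega), ih]; push_cast; ring

/-- Number of treated sequences in period `j`. -/
lemma ITaux_ind_sum (Q j : ℕ) (h1 : 1 ≤ j) (h2 : j ≤ Q+1) :
    ∑ q ∈ Finset.Icc 1 Q, (if q < j then (1:ℝ) else 0) = (j:ℝ) - 1 := by
  rw [← Finset.sum_filter]
  have h : (Finset.Icc 1 Q).filter (fun q => q < j) = Finset.Icc 1 (j-1) := by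
    ext x; simp only [Finset.mem_filter, Finset.mem_Icc]; omega
  rw [h, Finset.sum_const, Nat.card_Icc]
  simp [Nat.cast_sub h1]

/-- Within each period the IT weights sum to zero. -/
lemma ITaux_period (Q : ℕ) (hQ : 2 ≤ Q) (γ : ℝ) (hγ : 0 ≤ γ) (j : ℕ)
    (h1 : 1 ≤ j) (h2 : j ≤ Q+1) :
    ∑ q ∈ Finset.Icc 1 Q, ITweight Q γ q j = 0 := by
  have hne : (1 + γ * (Q:ℝ)) ≠ 0 := by positivity
  simp only [ITweight, ← Finset.mul_sum]
  have step : ∀ q ∈ Finset.Icc 1 Q,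
      ((Q : ℝ) * (if q < j then (1 : ℝ) else 0) + 1 - (j : ℝ) +
        γ * (Q : ℝ) * (2 * (q : ℝ) - (Q : ℝ) - 1) / (2 * (1 + γ * (Q : ℝ))))
      = (Q:ℝ) * (if q < j then (1:ℝ) else 0) + (γ*(Q:ℝ)/(1+γ*(Q:ℝ))) * (q:ℝ)
        + (1 - (j:ℝ) - γ*(Q:ℝ)*((Q:ℝ)+1)/(2*(1+γ*(Q:ℝ)))) := by
    intro q _
    generalize (if q < j then (1:ℝ) else 0) = b
    field_simp
    ring
  rw [Finset.sum_congr rfl step, Finset.sum_add_distrib, Finset.sum_add_distrib,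
    ← Finset.mul_sum, ← Finset.mul_sum, Finset.sum_const, nsmul_eq_mul, Nat.card_Icc,
    ITaux_ind_sum Q j h1 h2, ITaux_gauss]
  simp only [Nat.add_sub_cancel]
  have h0 : (Q:ℝ) * ((j:ℝ) - 1) + γ*(Q:ℝ)/(1+γ*(Q:ℝ)) * ((Q:ℝ)*((Q:ℝ)+1)/2)
      + (Q:ℝ) * (1 - (j:ℝ) - γ*(Q:ℝ)*((Q:ℝ)+1)/(2*(1+γ*(Q:ℝ)))) = 0 := by
    field_simp
    ring
  rw [h0, mul_zero]

/-- The sum of the IT weights over all cells with exposure time `s`. -/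
lemma ITaux_exposure (Q : ℕ) (hQ : 2 ≤ Q) (γ : ℝ) (hγ : 0 ≤ γ) (s : ℕ)
    (h1 : 1 ≤ s) (h2 : s ≤ Q) :
    ∑ q ∈ Finset.Icc 1 (Q + 1 - s), ITweight Q γ q (q + s)
      = 6 * ((s : ℝ) - (Q : ℝ) - 1) *
          ((1 + 2 * γ * (Q : ℝ)) * (s : ℝ) - (1 + γ + γ * (Q : ℝ)) * (Q : ℝ)) /
        ((Q : ℝ) * ((Q : ℝ) + 1) *
          (γ * (Q : ℝ) ^ 2 + 2 * (Q : ℝ) - γ * (Q : ℝ) - 2)) := by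
  have hne : (1 + γ * (Q:ℝ)) ≠ 0 := by positivity
  have hQ1 : (0:ℝ) < (Q:ℝ) - 1 := by
    have : (2:ℝ) ≤ (Q:ℝ) := by exact_mod_cast hQ
    linarith
  have hfac : γ * (Q : ℝ) ^ 2 + 2 * (Q:ℝ) - γ * (Q:ℝ) - 2 = ((Q:ℝ) - 1) * (γ * Q + 2) := by
    ring
  have hDpos : (0:ℝ) < (Q : ℝ) * ((Q : ℝ) + 1) *
      (γ * (Q : ℝ) ^ 2 + 2 * (Q:ℝ) - γ * (Q:ℝ) - 2) := by
    rw [hfac]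
    have hQ0 : (0:ℝ) < (Q:ℝ) := by positivity
    positivity
  have hn : ((Q + 1 - s : ℕ) : ℝ) = (Q:ℝ) + 1 - (s:ℝ) := by
    rw [Nat.cast_sub (by omega)]; push_cast; ring
  have step : ∀ q ∈ Finset.Icc 1 (Q + 1 - s), ITweight Q γ q (q + s)
      = (12 * (1 + γ * Q) / ((Q : ℝ) * ((Q : ℝ) + 1) * (γ * (Q : ℝ) ^ 2 + 2 * Q - γ * Q - 2))) *
        ((γ*(Q:ℝ)/(1+γ*(Q:ℝ)) - 1) * (q:ℝ)
          + ((Q:ℝ) + 1 - (s:ℝ) - γ*(Q:ℝ)*((Q:ℝ)+1)/(2*(1+γ*(Q:ℝ))))) := by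
    intro q _
    have hlt : q < q + s := by omega
    rw [ITweight, if_pos hlt]
    push_cast
    congr 1
    field_simp
    ring
  rw [Finset.sum_congr rfl step, ← Finset.mul_sum, Finset.sum_add_distrib,
    ← Finset.mul_sum, ITaux_gauss, Finset.sum_const, nsmul_eq_mul, Nat.card_Icc]
  simp only [Nat.add_sub_cancel, hn]
  field_simp
  ring

/-- Reindexing the treated cells by exposure time. -/
lemma ITaux_reindex (Q : ℕ) (c : ℕ → ℕ → ℝ) (δ : ℕ → ℝ) :
    ∑ j ∈ Finset.Icc 1 (Q+1), ∑ q ∈ Finset.Icc 1 Q,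
        (if q < j then c q j * δ (j - q) else 0)
      = ∑ s ∈ Finset.Icc 1 Q, ∑ q ∈ Finset.Icc 1 (Q+1-s), c q (q+s) * δ s := by
  simp only [← Finset.sum_filter]
  rw [Finset.sum_sigma', Finset.sum_sigma']
  refine Finset.sum_nbij' (fun p => ⟨p.1 - p.2, p.2⟩) (fun p => ⟨p.2 + p.1, p.2⟩) ?_ ?_ ?_ ?_ ?_
  · rintro ⟨j, q⟩ hm
    simp only [Finset.mem_sigma, Finset.mem_filter, Finset.mem_Icc] at hm ⊢
    omega
  · rintro ⟨s, q⟩ hm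
    simp only [Finset.mem_sigma, Finset.mem_filter, Finset.mem_Icc] at hm ⊢
    omega
  · rintro ⟨j, q⟩ hm
    simp only [Finset.mem_sigma, Finset.mem_filter, Finset.mem_Icc] at hm
    simp only [show q + (j - q) = j from by omega]
  · rintro ⟨s, q⟩ hm
    simp only [Finset.mem_sigma, Finset.mem_filter, Finset.mem_Icc] at hm
    simp only [show q + s - q = s from by omega]
  · rintro ⟨j, q⟩ hm
    simp only [Finset.mem_sigma, Finset.mem_filter, Finset.mem_Icc] at hm
    simp only []
    rw [show q + (j - q) = j by omega]

/-- With a true underlying exposure time-varying treatment effect structure (a treated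
cell in period `j` of sequence `q` has exposure time `s = j − q`), the misspecified IT
estimator is in expectation the weighted sum of the exposure time-varying treatment
effect estimands with weights
`w₁(Q,γ,s) = 6(s−Q−1)((1+2γQ)s−(1+γ+γQ)Q)/(Q(Q+1)(γQ²+2Q−γQ−2))`. -/
theorem IT_estimator_exposure_time_weights
    (Q : ℕ) (hQ : 2 ≤ Q) (γ : ℝ) (hγ : 0 ≤ γ) (φ δ : ℕ → ℝ) :
    ∑ j ∈ Finset.Icc 1 (Q + 1), ∑ q ∈ Finset.Icc 1 Q,
        ITweight Q γ q j * ((if q < j then δ (j - q) else 0) + φ j)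
      = ∑ s ∈ Finset.Icc 1 Q,
          (6 * ((s : ℝ) - (Q : ℝ) - 1) *
              ((1 + 2 * γ * (Q : ℝ)) * (s : ℝ) - (1 + γ + γ * (Q : ℝ)) * (Q : ℝ)) /
            ((Q : ℝ) * ((Q : ℝ) + 1) *
              (γ * (Q : ℝ) ^ 2 + 2 * (Q : ℝ) - γ * (Q : ℝ) - 2))) * δ s := by
  have hφ : ∑ j ∈ Finset.Icc 1 (Q+1),
      (∑ q ∈ Finset.Icc 1 Q, ITweight Q γ q j) * φ j = 0 := by
    apply Finset.sum_eq_zero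
    intro j hj
    rw [ITaux_period Q hQ γ hγ j (Finset.mem_Icc.mp hj).1 (Finset.mem_Icc.mp hj).2, zero_mul]
  calc ∑ j ∈ Finset.Icc 1 (Q + 1), ∑ q ∈ Finset.Icc 1 Q,
        ITweight Q γ q j * ((if q < j then δ (j - q) else 0) + φ j)
      = (∑ j ∈ Finset.Icc 1 (Q+1), ∑ q ∈ Finset.Icc 1 Q,
          (if q < j then ITweight Q γ q j * δ (j - q) else 0))
        + ∑ j ∈ Finset.Icc 1 (Q+1), (∑ q ∈ Finset.Icc 1 Q, ITweight Q γ q j) * φ j := by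
        simp only [mul_add, mul_ite, mul_zero, Finset.sum_add_distrib, Finset.sum_mul]
    _ = ∑ s ∈ Finset.Icc 1 Q, ∑ q ∈ Finset.Icc 1 (Q+1-s), ITweight Q γ q (q+s) * δ s := by
        rw [hφ, add_zero, ITaux_reindex]
    _ = _ := by
        apply Finset.sum_congr rfl
        intro s hs
        rw [← Finset.sum_mul,
          ITaux_exposure Q hQ γ hγ s (Finset.mem_Icc.mp hs).1 (Finset.mem_Icc.mp hs).2]
end

section
/- Let Q ≥ 2 be an integer, γ ≥ 0 a real number, and J = Q+1. For every real θ and all real period effects φ_1,…,φ_J, the IT-estimator weights applied to the marginal cell means of a correctly specified immediate treatment effect model recover the treatment effect exactly: Σ_{j=1}^{J} Σ_{q=1}^{Q} c(q,j)·(θ·1{j>q} + φ_j) = θ. -/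
lemma sum_quad (n : ℕ) (a b c : ℝ) :
    ∑ q ∈ Finset.Icc 1 n, (a + b*(q:ℝ) + c*(q:ℝ)^2)
      = n*a + b*((n:ℝ)*(n+1)/2) + c*((n:ℝ)*(n+1)*(2*n+1)/6) := by
  induction n with
  | zero => simp
  | succ n ih =>
    rw [Finset.sum_Icc_succ_top (by omega), ih]
    push_cast
    ring

lemma sum_ind (Q j : ℕ) (hj1 : 1 ≤ j) (hj : j ≤ Q+1) :
    ∑ q ∈ Finset.Icc 1 Q, (if q < j then (1:ℝ) else 0) = (j:ℝ) - 1 := by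
  classical
  rw [Finset.sum_boole]
  have h : (Finset.Icc 1 Q).filter (fun q => q < j) = Finset.Icc 1 (j-1) := by
    ext x; simp only [Finset.mem_filter, Finset.mem_Icc]; omega
  rw [h, Nat.card_Icc]
  have h2 : j - 1 + 1 - 1 = j - 1 := by omega
  rw [h2]
  push_cast [hj1]
  ring

set_option maxHeartbeats 1600000 in
/-- Under a correctly specified immediate treatment effect model, the IT-estimator
weights applied to the marginal cell means recover the treatment effect exactly. -/
theorem IT_estimator_correctly_specified
    (Q : ℕ) (hQ : 2 ≤ Q) (γ : ℝ) (hγ : 0 ≤ γ) (θ : ℝ) (φ : ℕ → ℝ) :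
    ∑ j ∈ Finset.Icc 1 (Q + 1), ∑ q ∈ Finset.Icc 1 Q,
        ITweight Q γ q j * (θ * (if q < j then (1 : ℝ) else 0) + φ j) = θ := by
    classical
  have hQ2 : (2:ℝ) ≤ (Q:ℝ) := by exact_mod_cast hQ
  have hQ0 : (Q:ℝ) ≠ 0 := by linarith
  have hQ1 : (Q:ℝ) + 1 ≠ 0 := by linarith
  have h1pos : (0:ℝ) < 1 + γ * Q := by nlinarith
  have h1 : (1:ℝ) + γ * Q ≠ 0 := ne_of_gt h1pos
  have hD : γ * (Q:ℝ)^2 + 2*Q - γ*Q - 2 ≠ 0 := by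
    have hk : (0:ℝ) ≤ γ * Q * (Q - 1) :=
      mul_nonneg (mul_nonneg hγ (by linarith)) (by linarith)
    nlinarith
  have hP : ((Q:ℝ) * ((Q:ℝ) + 1) * (γ * (Q:ℝ) ^ 2 + 2 * Q - γ * Q - 2)) ≠ 0 :=
    mul_ne_zero (mul_ne_zero hQ0 hQ1) hD
  have hP2 : (-((Q:ℝ) * 2) - (Q:ℝ) ^ 2 * γ + (Q:ℝ) ^ 3 * 2 + (Q:ℝ) ^ 4 * γ) ≠ 0 := by
    have he : (-((Q:ℝ) * 2) - (Q:ℝ) ^ 2 * γ + (Q:ℝ) ^ 3 * 2 + (Q:ℝ) ^ 4 * γ)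
        = (Q:ℝ) * ((Q:ℝ) + 1) * (γ * (Q:ℝ) ^ 2 + 2 * Q - γ * Q - 2) := by ring
    rw [he]; exact hP
  set M : ℝ := 12 * (1 + γ * Q) / ((Q : ℝ) * ((Q : ℝ) + 1) * (γ * (Q : ℝ) ^ 2 + 2 * Q - γ * Q - 2)) with hM
  set F : ℝ := M * (γ * Q * 2 / (2 * (1 + γ * (Q:ℝ)))) with hF
  set K : ℝ := M * (γ * Q * (-(Q:ℝ) - 1) / (2 * (1 + γ * (Q:ℝ)))) with hK
  -- pointwise decomposition of ITweight
  have hpt : ∀ (q j : ℕ), ITweight Q γ q j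
      = (M * Q) * (if q < j then (1:ℝ) else 0) + ((M * (1 - (j:ℝ)) + K) + F * (q:ℝ) + 0 * (q:ℝ)^2) := by
    intro q j
    unfold ITweight
    rw [← hM]
    set x : ℝ := (if q < j then (1:ℝ) else 0)
    rw [hF, hK]
    ring
  -- column sums are zero
  have colsum : ∀ j ∈ Finset.Icc 1 (Q+1), ∑ q ∈ Finset.Icc 1 Q, ITweight Q γ q j = 0 := by
    intro j hj
    rw [Finset.mem_Icc] at hj
    calc ∑ q ∈ Finset.Icc 1 Q, ITweight Q γ q j
        = ∑ q ∈ Finset.Icc 1 Q, ((M * Q) * (if q < j then (1:ℝ) else 0)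
            + ((M * (1 - (j:ℝ)) + K) + F * (q:ℝ) + 0 * (q:ℝ)^2)) := by
          exact Finset.sum_congr rfl fun q _ => hpt q j
      _ = (M * Q) * ((j:ℝ) - 1) + ((Q:ℝ)*(M * (1 - (j:ℝ)) + K) + F*((Q:ℝ)*(Q+1)/2) + 0*((Q:ℝ)*(Q+1)*(2*Q+1)/6)) := by
          rw [Finset.sum_add_distrib, ← Finset.mul_sum, sum_ind Q j hj.1 hj.2, sum_quad]
      _ = 0 := by
          rw [hM, hF, hK]; field_simp [hP2]; ring
  -- treatment sums
  have Asum : ∀ j ∈ Finset.Icc 1 (Q+1),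
      ∑ q ∈ Finset.Icc 1 Q, ITweight Q γ q j * (if q < j then (1:ℝ) else 0)
      = (-M*((Q:ℝ)+1) - K) + (M*((Q:ℝ)+2) + K - F/2) * (j:ℝ) + (-M + F/2) * (j:ℝ)^2 := by
    intro j hj
    rw [Finset.mem_Icc] at hj
    have hfil : (Finset.Icc 1 Q).filter (fun q => q < j) = Finset.Icc 1 (j-1) := by
      ext x; simp only [Finset.mem_filter, Finset.mem_Icc]; omega
    calc ∑ q ∈ Finset.Icc 1 Q, ITweight Q γ q j * (if q < j then (1:ℝ) else 0)
        = ∑ q ∈ Finset.Icc 1 Q, (if q < j then ITweight Q γ q j else 0) := by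
          exact Finset.sum_congr rfl fun q _ => by split <;> simp
      _ = ∑ q ∈ Finset.Icc 1 (j-1), ITweight Q γ q j := by
          rw [← hfil, Finset.sum_filter]
      _ = ∑ q ∈ Finset.Icc 1 (j-1), (((M * Q) + (M * (1 - (j:ℝ)) + K)) + F * (q:ℝ) + 0 * (q:ℝ)^2) := by
          refine Finset.sum_congr rfl fun q hq => ?_
          rw [Finset.mem_Icc] at hq
          have hqj : q < j := by omega
          rw [hpt q j, if_pos hqj]
          ring
      _ = ((j:ℝ)-1)*((M * Q) + (M * (1 - (j:ℝ)) + K)) + F*(((j:ℝ)-1)*(((j:ℝ)-1)+1)/2) + 0*(((j:ℝ)-1)*(((j:ℝ)-1)+1)*(2*((j:ℝ)-1)+1)/6) := by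
          rw [sum_quad]
          have hc : ((j - 1 : ℕ) : ℝ) = (j:ℝ) - 1 := by
            push_cast [hj.1]; ring
          rw [hc]
      _ = (-M*((Q:ℝ)+1) - K) + (M*((Q:ℝ)+2) + K - F/2) * (j:ℝ) + (-M + F/2) * (j:ℝ)^2 := by
          ring
  -- assemble
  have step : ∀ j ∈ Finset.Icc 1 (Q+1),
      ∑ q ∈ Finset.Icc 1 Q, ITweight Q γ q j * (θ * (if q < j then (1:ℝ) else 0) + φ j)
      = θ * (∑ q ∈ Finset.Icc 1 Q, ITweight Q γ q j * (if q < j then (1:ℝ) else 0))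
        + (∑ q ∈ Finset.Icc 1 Q, ITweight Q γ q j) * φ j := by
    intro j _
    rw [Finset.mul_sum, Finset.sum_mul, ← Finset.sum_add_distrib]
    exact Finset.sum_congr rfl fun q _ => by ring
  rw [Finset.sum_congr rfl step, Finset.sum_add_distrib]
  have hz : ∑ j ∈ Finset.Icc 1 (Q+1), (∑ q ∈ Finset.Icc 1 Q, ITweight Q γ q j) * φ j = 0 := by
    refine Finset.sum_eq_zero fun j hj => ?_
    rw [colsum j hj, zero_mul]
  rw [hz, add_zero]
  have hA : ∑ j ∈ Finset.Icc 1 (Q+1),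
      θ * (∑ q ∈ Finset.Icc 1 Q, ITweight Q γ q j * (if q < j then (1:ℝ) else 0)) = θ * 1 := by
    rw [← Finset.mul_sum]
    congr 1
    calc ∑ j ∈ Finset.Icc 1 (Q+1), ∑ q ∈ Finset.Icc 1 Q, ITweight Q γ q j * (if q < j then (1:ℝ) else 0)
        = ∑ j ∈ Finset.Icc 1 (Q+1), ((-M*((Q:ℝ)+1) - K) + (M*((Q:ℝ)+2) + K - F/2) * (j:ℝ) + (-M + F/2) * (j:ℝ)^2) := by
          exact Finset.sum_congr rfl Asum
      _ = ((Q:ℝ)+1)*(-M*((Q:ℝ)+1) - K) + (M*((Q:ℝ)+2) + K - F/2)*(((Q:ℝ)+1)*(((Q:ℝ)+1)+1)/2) + (-M + F/2)*(((Q:ℝ)+1)*(((Q:ℝ)+1)+1)*(2*((Q:ℝ)+1)+1)/6) := by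
          rw [sum_quad]
          push_cast
          ring
      _ = 1 := by
          have hE : ((Q:ℝ)+1)*(-M*((Q:ℝ)+1) - K) + (M*((Q:ℝ)+2) + K - F/2)*(((Q:ℝ)+1)*(((Q:ℝ)+1)+1)/2) + (-M + F/2)*(((Q:ℝ)+1)*(((Q:ℝ)+1)+1)*(2*((Q:ℝ)+1)+1)/6)
              = 12*(1+γ*(Q:ℝ)) * ( ((Q:ℝ)+1)*(-((Q:ℝ)+1) - (γ*(Q:ℝ)*(-(Q:ℝ)-1)/(2*(1+γ*(Q:ℝ))))) + (((Q:ℝ)+2) + (γ*(Q:ℝ)*(-(Q:ℝ)-1)/(2*(1+γ*(Q:ℝ)))) - (γ*(Q:ℝ)*2/(2*(1+γ*(Q:ℝ))))/2)*(((Q:ℝ)+1)*(((Q:ℝ)+1)+1)/2) + (-1 + (γ*(Q:ℝ)*2/(2*(1+γ*(Q:ℝ))))/2)*(((Q:ℝ)+1)*(((Q:ℝ)+1)+1)*(2*((Q:ℝ)+1)+1)/6) )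
                / ((Q:ℝ) * ((Q:ℝ) + 1) * (γ * (Q:ℝ) ^ 2 + 2 * Q - γ * Q - 2)) := by
            rw [hM, hF, hK]; ring
          rw [hE, div_eq_iff hP]
          field_simp [h1]
          ring
  rw [hA, mul_one]
end

section
/- Consider the 3-sequence, 3-period stepped-wedge analysis (the 4-period design with the final period excluded) with one cluster per sequence and exchangeable working correlation with parameter γ ∈ [0,1). Let Z be the 9×5 real design matrix of the calendar time indicator (CTI) model whose rows are indexed by pairs (i,j) with cluster i ∈ {1,2,3} and period j ∈ {1,2,3}, with columns (ξ_2, ξ_3, φ_1, φ_2, φ_3): in row (i,j), the ξ_c column equals 1 if j = c and j > i and 0 otherwise, and the φ_{j'} column equals 1 if j' = j and 0 otherwise. Let V = I_3 ⊗ R_3 with R_3 = (1−γ)·I_3 + γ·J_3 (J_3 the all-ones 3×3 matrix). Let μ ∈ ℝ⁹ have entries μ_{(i,j)} = 1{j > i}·δ_{j−i} + φ_j for arbitrary reals δ_1, δ_2, φ_1, φ_2, φ_3. Then V and ZᵀV⁻¹Z are invertible, and with β̂ = (ZᵀV⁻¹Z)⁻¹ZᵀV⁻¹μ the calendar time-averaged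 treatment effect estimator satisfies (β̂_{ξ_2} + β̂_{ξ_3})/2 = [(9γ² + 15γ + 6)·δ_1 + (−3γ² + γ + 2)·δ_2] / (2(3γ² + 8γ + 4)). -/
/-! The exchangeable covariance is `(1 − γ) I + γ (I ⊗ J)`, positive definite for `0 ≤ γ < 1`,
and the CTI design has full column rank, so `ZᵀV⁻¹Z` is positive definite as well. Instead of
inverting it, we guess the GLS fit `β̂` and the weight `w = V⁻¹ (μ − Z β̂)` in closed form and
check the two polynomial identities `V w = μ − Z β̂` and `Zᵀ w = 0`; together they are the
normal equations, which determine `β̂`. -/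

open Matrix

/-- Design matrix of the calendar time indicator (CTI) model for the 3-sequence,
3-period stepped-wedge analysis (the 4-period design with the final period excluded),
one cluster per sequence. Rows are indexed by `(i, j)` with cluster `i ∈ {1,2,3}`
(coded `Fin 3`, value `i.val + 1`) and period `j ∈ {1,2,3}` (coded `Fin 3`, value
`j.val + 1`); columns `0,1` are the calendar treatment indicators `ξ₂, ξ₃` and columns
`2,3,4` are the period indicators `φ₁, φ₂, φ₃`. -/
def ZCTI : Matrix (Fin 3 × Fin 3) (Fin 5) ℝ := fun p c =>
  let i : ℕ := (p.1 : ℕ) + 1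
  let j : ℕ := (p.2 : ℕ) + 1
  if (c : ℕ) < 2 then
    (if j = (c : ℕ) + 2 ∧ i < j then 1 else 0)
  else
    (if j = (c : ℕ) - 1 then 1 else 0)

/-- Block-diagonal exchangeable covariance `V = I₃ ⊗ R₃`, `R₃ = (1−γ)I₃ + γJ₃`. -/
def VexchCTI (γ : ℝ) : Matrix (Fin 3 × Fin 3) (Fin 3 × Fin 3) ℝ := fun p q =>
  if p.1 = q.1 then (if p.2 = q.2 then 1 else γ) else 0

/-- Vector of marginal cell means under a true exposure time-varying treatment effect
structure: cell `(i,j)` has mean `1{j>i}·δ_{j−i} + φ_j`. -/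
def muExp (δ φ : ℕ → ℝ) : (Fin 3 × Fin 3) → ℝ := fun p =>
  let i : ℕ := (p.1 : ℕ) + 1
  let j : ℕ := (p.2 : ℕ) + 1
  (if i < j then δ (j - i) else 0) + φ j

/-- The GLS coefficient vector `β̂ = (ZᵀV⁻¹Z)⁻¹ZᵀV⁻¹μ` of the CTI model applied to the
marginal cell means `μ`. -/
noncomputable def betaCTI (γ : ℝ) (δ φ : ℕ → ℝ) : Fin 5 → ℝ :=
  (ZCTIᵀ * (VexchCTI γ)⁻¹ * ZCTI)⁻¹ *ᵥ (ZCTIᵀ *ᵥ ((VexchCTI γ)⁻¹ *ᵥ muExp δ φ))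

theorem gls_eq_of_residual_orthogonal {R m n : Type*} [CommRing R] [Fintype m] [Fintype n]
    [DecidableEq m] [DecidableEq n] {V : Matrix m m R} {Z : Matrix m n R} {μ w : m → R}
    {b : n → R} (hV : IsUnit V.det) (hA : IsUnit (Zᵀ * V⁻¹ * Z).det)
    (hw : V *ᵥ w = μ - Z *ᵥ b) (hZw : Zᵀ *ᵥ w = 0) :
    (Zᵀ * V⁻¹ * Z)⁻¹ *ᵥ (Zᵀ *ᵥ (V⁻¹ *ᵥ μ)) = b := by
  have hμ : V⁻¹ *ᵥ μ = w + V⁻¹ *ᵥ (Z *ᵥ b) := by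
    rw [eq_sub_iff_add_eq] at hw
    rw [← hw, mulVec_add, mulVec_mulVec, nonsing_inv_mul _ hV, one_mulVec]
  have normal_eq : Zᵀ *ᵥ (V⁻¹ *ᵥ μ) = (Zᵀ * V⁻¹ * Z) *ᵥ b := by
    rw [hμ, mulVec_add, hZw, zero_add, mulVec_mulVec, mulVec_mulVec, Matrix.mul_assoc]
  rw [normal_eq, mulVec_mulVec, nonsing_inv_mul _ hA, one_mulVec]

theorem posDef_transpose_mul_inv_mul {m n : Type*} [Fintype m] [Fintype n] [DecidableEq m]
    {V : Matrix m m ℝ} {Z : Matrix m n ℝ} (hV : V.PosDef) (hZ : Function.Injective Z.mulVec) :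
    (Zᵀ * V⁻¹ * Z).PosDef := by
  simpa only [conjTranspose_eq_transpose_of_trivial] using hV.inv.conjTranspose_mul_mul_same hZ

def clusterIndicator (ι κ : Type*) [DecidableEq ι] : Matrix ι (ι × κ) ℝ :=
  of fun i p => if i = p.1 then 1 else 0

theorem VexchCTI_eq (γ : ℝ) :
    VexchCTI γ = (1 - γ) • (1 : Matrix (Fin 3 × Fin 3) (Fin 3 × Fin 3) ℝ) +
      γ • ((clusterIndicator (Fin 3) (Fin 3))ᵀ * clusterIndicator (Fin 3) (Fin 3)) := by
  ext ⟨a, b⟩ ⟨c, d⟩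
  rcases eq_or_ne a c with rfl | hac
  · by_cases hbd : b = d <;> simp [VexchCTI, clusterIndicator, mul_apply, one_apply, hbd]
  · simp [VexchCTI, clusterIndicator, mul_apply, one_apply, hac, hac.symm]

theorem posDef_VexchCTI {γ : ℝ} (hγ0 : 0 ≤ γ) (hγ1 : γ < 1) : (VexchCTI γ).PosDef := by
  rw [VexchCTI_eq]
  refine (PosDef.one.smul (sub_pos.2 hγ1)).add_posSemidef ?_
  simpa only [conjTranspose_eq_transpose_of_trivial] using
    (posSemidef_conjTranspose_mul_self (clusterIndicator (Fin 3) (Fin 3))).smul hγ0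

theorem injective_mulVec_ZCTI : Function.Injective ZCTI.mulVec := by
  intro x y h
  have h11 := congrFun h (0, 0); have h12 := congrFun h (0, 1); have h13 := congrFun h (0, 2)
  have h32 := congrFun h (2, 1); have h33 := congrFun h (2, 2)
  simp [ZCTI, mulVec, dotProduct, Fin.sum_univ_five] at h11 h12 h13 h32 h33
  ext c
  fin_cases c <;> dsimp <;> linarith

/-- When `δ 1 = δ 2` the CTI model is correctly specified and this is `(δ₁, δ₂, φ₁, φ₂, φ₃)`;
misspecification shifts it along a fixed direction in proportion to `δ₂ − δ₁`. -/
noncomputable def ctiFit (γ : ℝ) (δ φ : ℕ → ℝ) : Fin 5 → ℝ :=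
  ![δ 1, δ 2, φ 1, φ 2, φ 3] + ((δ 2 - δ 1) / (3 * γ ^ 2 + 8 * γ + 4)) •
    ![-3 * γ * (γ + 1), -3 * γ ^ 2 - 4 * γ - 2, 0, γ * (γ + 1), γ ^ 2]

/-- The GLS residual weight `V⁻¹ (μ − Z · ctiFit)`, cluster by cluster. -/
noncomputable def ctiResidualWeight (γ : ℝ) (δ : ℕ → ℝ) : Fin 3 × Fin 3 → ℝ := fun p =>
  (δ 2 - δ 1) / ((1 - γ) * (3 * γ ^ 2 + 8 * γ + 4)) *
    ![![-2 * γ * (γ + 1), 0, 2 * (γ + 1)],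
      ![γ * (γ + 2), γ, -2 * (γ + 1)],
      ![γ ^ 2, -γ, 0]] p.1 p.2

theorem ZCTI_transpose_mulVec_ctiResidualWeight (γ : ℝ) (δ : ℕ → ℝ) :
    ZCTIᵀ *ᵥ ctiResidualWeight γ δ = 0 := by
  ext c
  fin_cases c <;>
    simp [ZCTI, ctiResidualWeight, mulVec, dotProduct, Fintype.sum_prod_type, Fin.sum_univ_three]
  ring

theorem VexchCTI_mulVec_ctiResidualWeight {γ : ℝ} (hγ0 : 0 ≤ γ) (hγ1 : γ ≠ 1) (δ φ : ℕ → ℝ) :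
    VexchCTI γ *ᵥ ctiResidualWeight γ δ = muExp δ φ - ZCTI *ᵥ ctiFit γ δ φ := by
  have h1γ : 1 - γ ≠ 0 := sub_ne_zero.2 hγ1.symm
  ext ⟨i, j⟩
  fin_cases i <;> fin_cases j <;>
    simp [VexchCTI, ctiResidualWeight, muExp, ZCTI, ctiFit, mulVec, dotProduct,
      Fintype.sum_prod_type, Fin.sum_univ_three, Fin.sum_univ_five] <;>
    field_simp <;> ring

/-- In the 3-sequence, 3-period stepped-wedge analysis with exchangeable working
correlation `γ ∈ [0,1)`, the misspecified CTATE (CTI-model GLS) estimator applied to an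
exposure time-varying truth equals
`[(9γ²+15γ+6)δ₁ + (−3γ²+γ+2)δ₂]/(2(3γ²+8γ+4))`. -/
theorem CTATE_estimator_exposure_truth
    (γ : ℝ) (hγ0 : 0 ≤ γ) (hγ1 : γ < 1) (δ φ : ℕ → ℝ) :
    IsUnit (VexchCTI γ).det ∧
    IsUnit (ZCTIᵀ * (VexchCTI γ)⁻¹ * ZCTI).det ∧
    (betaCTI γ δ φ 0 + betaCTI γ δ φ 1) / 2
      = ((9 * γ ^ 2 + 15 * γ + 6) * δ 1 + (-3 * γ ^ 2 + γ + 2) * δ 2) /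
          (2 * (3 * γ ^ 2 + 8 * γ + 4)) := by
  have hV := posDef_VexchCTI hγ0 hγ1
  have hA := posDef_transpose_mul_inv_mul hV injective_mulVec_ZCTI
  have hVdet := (isUnit_iff_isUnit_det _).1 hV.isUnit
  have hAdet := (isUnit_iff_isUnit_det _).1 hA.isUnit
  have hβ : betaCTI γ δ φ = ctiFit γ δ φ :=
    gls_eq_of_residual_orthogonal hVdet hAdet
      (VexchCTI_mulVec_ctiResidualWeight hγ0 hγ1.ne δ φ)
      (ZCTI_transpose_mulVec_ctiResidualWeight γ δ)
  refine ⟨hVdet, hAdet, ?_⟩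
  rw [hβ]
  simp only [ctiFit, Pi.add_apply, Pi.smul_apply, smul_eq_mul, cons_val_zero, cons_val_one]
  field_simp
  ring
end

section
/- In the 3-sequence, 4-period stepped-wedge design with one cluster per sequence, consider the ETI analysis of the previous setting with independence working correlation (γ = 0, i.e., V = I₁₂), so β̂ = (ZᵀZ)⁻¹Zᵀμ is the ordinary least squares estimator. Then ZᵀZ is invertible and the exposure time-averaged treatment effect estimator applied to the calendar time-varying truth satisfies (β̂_{δ_1} + β̂_{δ_2} + β̂_{δ_3})/3 = (6·ξ_2 + 7·ξ_3)/13; in particular both estimand weights 6/13 and 7/13 are nonnegative and sum to 1. -/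
open Matrix

/-- Design matrix of the exposure time indicator (ETI) model for the 3-sequence,
4-period stepped-wedge design with one cluster per sequence. Rows are indexed by
`(i, j)` with cluster `i ∈ {1,2,3}` (coded `Fin 3`, value `i.val + 1`) and period
`j ∈ {1,2,3,4}` (coded `Fin 4`, value `j.val + 1`); columns `0,1,2` are the exposure
time indicators `δ₁, δ₂, δ₃` and columns `3,4,5,6` are the period indicators
`φ₁, φ₂, φ₃, φ₄`. -/
def ZETI : Matrix (Fin 3 × Fin 4) (Fin 7) ℝ := fun p c =>
  let i : ℕ := (p.1 : ℕ) + 1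
  let j : ℕ := (p.2 : ℕ) + 1
  if (c : ℕ) < 3 then
    (if i < j ∧ j - i = (c : ℕ) + 1 then 1 else 0)
  else
    (if j = (c : ℕ) - 2 then 1 else 0)

/-- Vector of marginal cell means under a true calendar time-varying treatment effect
structure: cell `(i,j)` has mean `1{j>i, 2≤j≤3}·ξ_j + φ_j`. -/
def muCal (ξ φ : ℕ → ℝ) : (Fin 3 × Fin 4) → ℝ := fun p =>
  let i : ℕ := (p.1 : ℕ) + 1
  let j : ℕ := (p.2 : ℕ) + 1
  (if i < j ∧ 2 ≤ j ∧ j ≤ 3 then ξ j else 0) + φ j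

/-- The OLS coefficient vector `β̂ = (ZᵀZ)⁻¹Zᵀμ` of the ETI model with independence
working correlation (`γ = 0`, `V = I₁₂`) applied to the marginal cell means `μ`. -/
noncomputable def betaETIols (ξ φ : ℕ → ℝ) : Fin 7 → ℝ :=
  (ZETIᵀ * ZETI)⁻¹ *ᵥ (ZETIᵀ *ᵥ muCal ξ φ)

/-! The design matrix has full column rank, so `ZᵀZ` is invertible and `β̂` is the unique solution
of the normal equations `ZᵀZ β = Zᵀμ`. That solution is exhibited explicitly: its exposure-time
coefficients are `(7ξ₂ + 6ξ₃)/13`, `(5ξ₂ + 8ξ₃)/13` and `(6ξ₂ + 7ξ₃)/13`, whose mean is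
`(6ξ₂ + 7ξ₃)/13`. -/

theorem Matrix.isUnit_det_transpose_mul_self_of_injective {m n R : Type*} [Fintype m] [Fintype n]
    [DecidableEq n] [Field R] [LinearOrder R] [IsStrictOrderedRing R] {A : Matrix m n R}
    (hA : Function.Injective A.mulVec) : IsUnit (Aᵀ * A).det := by
  rwa [← isUnit_iff_isUnit_det, ← mulVec_injective_iff_isUnit, ← coe_mulVecLin,
    ← LinearMap.ker_eq_bot, ker_mulVecLin_transpose_mul_self, LinearMap.ker_eq_bot, coe_mulVecLin]

theorem ZETI_mulVec_injective : Function.Injective ZETI.mulVec := by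
  rw [← coe_mulVecLin, injective_iff_map_eq_zero]
  intro v hv
  have cell (p : Fin 3 × Fin 4) : ∑ c, ZETI p c * v c = 0 := congrFun hv p
  have h₁₁ : v 3 = 0 := by simpa [Fin.sum_univ_succ, ZETI] using cell (0, 0)
  have h₂₂ : v 4 = 0 := by simpa [Fin.sum_univ_succ, ZETI] using cell (1, 1)
  have h₃₃ : v 5 = 0 := by simpa [Fin.sum_univ_succ, ZETI] using cell (2, 2)
  have h₁₂ : v 0 + v 4 = 0 := by simpa [Fin.sum_univ_succ, ZETI] using cell (0, 1)
  have h₁₃ : v 1 + v 5 = 0 := by simpa [Fin.sum_univ_succ, ZETI] using cell (0, 2)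
  have h₁₄ : v 2 + v 6 = 0 := by simpa [Fin.sum_univ_succ, ZETI] using cell (0, 3)
  have h₃₄ : v 0 + v 6 = 0 := by simpa [Fin.sum_univ_succ, ZETI] using cell (2, 3)
  ext c
  fin_cases c <;>
    simp only [Fin.zero_eta, Fin.mk_one, Fin.reduceFinMk, Fin.isValue, Pi.zero_apply] <;> linarith

theorem isUnit_det_ZETI_transpose_mul_self : IsUnit (ZETIᵀ * ZETI).det :=
  isUnit_det_transpose_mul_self_of_injective ZETI_mulVec_injective

noncomputable def etiFit (ξ φ : ℕ → ℝ) : Fin 7 → ℝ :=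
  ![(7 * ξ 2 + 6 * ξ 3) / 13, (5 * ξ 2 + 8 * ξ 3) / 13, (6 * ξ 2 + 7 * ξ 3) / 13, φ 1,
    φ 2 + (2 * ξ 2 - 2 * ξ 3) / 13, φ 3 + (4 * ξ 3 - 4 * ξ 2) / 13, φ 4 - (6 * ξ 2 + 7 * ξ 3) / 13]

theorem ZETI_normal_equations (ξ φ : ℕ → ℝ) :
    (ZETIᵀ * ZETI) *ᵥ etiFit ξ φ = ZETIᵀ *ᵥ muCal ξ φ := by
  rw [← mulVec_mulVec]
  ext c
  fin_cases c <;>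
    simp [mulVec, dotProduct, Fintype.sum_prod_type, Fin.sum_univ_succ, ZETI, muCal, etiFit] <;>
    ring

theorem betaETIols_eq_etiFit (ξ φ : ℕ → ℝ) : betaETIols ξ φ = etiFit ξ φ :=
  letI := invertibleOfIsUnitDet _ isUnit_det_ZETI_transpose_mul_self
  inv_mulVec_eq_vec (ZETI_normal_equations ξ φ).symm

/-- In the 3-sequence, 4-period stepped-wedge design with independence working
correlation, the misspecified ETATE (ETI-model OLS) estimator applied to a calendar
time-varying truth equals `(6ξ₂ + 7ξ₃)/13`; both estimand weights `6/13` and `7/13`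
are nonnegative and sum to 1. -/
theorem ETATE_ols_estimator_calendar_truth (ξ φ : ℕ → ℝ) :
    IsUnit (ZETIᵀ * ZETI).det ∧
    (betaETIols ξ φ 0 + betaETIols ξ φ 1 + betaETIols ξ φ 2) / 3
      = (6 * ξ 2 + 7 * ξ 3) / 13 ∧
    (0 ≤ (6 : ℝ) / 13 ∧ 0 ≤ (7 : ℝ) / 13 ∧ (6 : ℝ) / 13 + 7 / 13 = 1) := by
  refine ⟨isUnit_det_ZETI_transpose_mul_self, ?_, by norm_num, by norm_num, by norm_num⟩
  simp only [betaETIols_eq_etiFit, etiFit, cons_val_zero, cons_val_one, cons_val]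
  ring
end

section
/- In the 3-sequence, 3-period stepped-wedge analysis with one cluster per sequence, consider the CTI analysis of the previous setting with independence working correlation (γ = 0, i.e., V = I₉), so β̂ = (ZᵀZ)⁻¹Zᵀμ is the ordinary least squares estimator. Then ZᵀZ is invertible and the calendar time-averaged treatment effect estimator applied to the exposure time-varying truth satisfies (β̂_{ξ_2} + β̂_{ξ_3})/2 = (3·δ_1 + δ_2)/4; in particular both estimand weights 3/4 and 1/4 are nonnegative and sum to 1. -/
open Matrix

/-- The OLS coefficient vector `β̂ = (ZᵀZ)⁻¹Zᵀμ` of the CTI model with independence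
working correlation (`γ = 0`, `V = I₉`) applied to the marginal cell means `μ`. -/
noncomputable def betaCTIols (δ φ : ℕ → ℝ) : Fin 5 → ℝ :=
  (ZCTIᵀ * ZCTI)⁻¹ *ᵥ (ZCTIᵀ *ᵥ muExp δ φ)

set_option maxHeartbeats 1000000 in
set_option maxRecDepth 8000 in
/-- In the 3-sequence, 3-period stepped-wedge analysis with independence working
correlation, the misspecified CTATE (CTI-model OLS) estimator applied to an exposure
time-varying truth equals `(3δ₁ + δ₂)/4`; both estimand weights `3/4` and `1/4` are
nonnegative and sum to 1. -/
theorem CTATE_ols_estimator_exposure_truth (δ φ : ℕ → ℝ) :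
    IsUnit (ZCTIᵀ * ZCTI).det ∧
    (betaCTIols δ φ 0 + betaCTIols δ φ 1) / 2 = (3 * δ 1 + δ 2) / 4 ∧
    (0 ≤ (3 : ℝ) / 4 ∧ 0 ≤ (1 : ℝ) / 4 ∧ (3 : ℝ) / 4 + 1 / 4 = 1) := by
  have hA : ZCTIᵀ * ZCTI =
      !![1,0,0,1,0; 0,2,0,0,2; 0,0,3,0,0; 1,0,0,3,0; 0,2,0,0,3] := by
    ext a b
    fin_cases a <;> fin_cases b <;>
      norm_num [ZCTI, Matrix.mul_apply, Fintype.sum_prod_type, Fin.sum_univ_succ] <;>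
      norm_num [Fin.lt_def, Finset.filter_singleton]
  have hdet : IsUnit (ZCTIᵀ * ZCTI).det := by
    apply Matrix.isUnit_det_of_right_inverse
      (B := !![3/2,0,0,-(1/2),0; 0,3/2,0,0,-1; 0,0,1/3,0,0;
               -(1/2),0,0,1/2,0; 0,-1,0,0,1])
    rw [hA]
    ext a b
    fin_cases a <;> fin_cases b <;>
      norm_num [Matrix.mul_apply, Fin.sum_univ_succ, Matrix.one_apply, Fin.ext_iff]
  have hb : ZCTIᵀ *ᵥ muExp δ φ =
      ![δ 1 + φ 2, δ 1 + δ 2 + 2 * φ 3, 3 * φ 1, δ 1 + 3 * φ 2,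
        δ 1 + δ 2 + 3 * φ 3] := by
    ext a
    fin_cases a <;>
      norm_num [ZCTI, muExp, Matrix.mulVec, dotProduct, Fintype.sum_prod_type,
        Fin.sum_univ_succ] <;>
      (try norm_num [Fin.lt_def, Fin.ext_iff]) <;> try ring
  have key : (ZCTIᵀ * ZCTI) *ᵥ ![δ 1, (δ 1 + δ 2) / 2, φ 1, φ 2, φ 3] =
      ZCTIᵀ *ᵥ muExp δ φ := by
    rw [hA, hb]
    ext a
    fin_cases a <;>
      norm_num [Matrix.mulVec, dotProduct, Fin.sum_univ_succ] <;> ring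
  have hbeta : betaCTIols δ φ = ![δ 1, (δ 1 + δ 2) / 2, φ 1, φ 2, φ 3] := by
    unfold betaCTIols
    rw [← key, Matrix.mulVec_mulVec, Matrix.nonsing_inv_mul _ hdet,
      Matrix.one_mulVec]
  refine ⟨hdet, ?_, by norm_num⟩
  rw [hbeta]
  simp only [Matrix.cons_val_zero, Matrix.cons_val_one, Matrix.head_cons]
  ring
end
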